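/- arXiv:math/0608144 — 5 statements merged into one kernel-verified Lean document; each statement's English description precedes it below -/
import Mathlib

section
/- In a k-additive pretriangulated category C (k a finite field) in which all Hom-spaces are finite-dimensional and the endomorphism ring of every indecomposable object is local, the following holds. Let M --(f1,f2)--> N1 ⊕ N2 --(g1;g2)--> L --h--> M[1] be a distinguished triangle whose first morphism has components f1 : M -> N1 and f2 : M -> N2, and suppose f2 = 0. Then there exist objects L1, L2, morphisms g11 : N1 -> L1 and h1 : L1 -> M[1], and an isomorphism g22 : N2 -> L2, such that M --f1--> N1 --g11--> L1 --h1--> M[1] is a distinguished triangle and the given triangle is isomorphic (as a triangle, via the identity on M and N1 ⊕ N2) to the triangle M --(f1,0)--> N1 ⊕ N2 --diag(g11,g22)--> L1 ⊕ L2 --(h1;0)--> M[1]. In particular the given triangle is the direct sum of the distinguished triangle (f1, g11, h1) and the contractible triangle 0 -> N2 --g22--> L2 -> 0. -/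
/-!
Complete `f₁` to a distinguished triangle `M → N₁ → L₁ → M⟦1⟧`. Its direct sum with the
contractible triangle `0 → N₂ → N₂ → 0` is again distinguished, being isomorphic to the product
of the two, and its first morphism is `(f₁, 0)`. Two distinguished triangles on
the same first morphism are isomorphic by an isomorphism that is the identity on the first two
objects, which yields `L ≅ L₁ ⊞ N₂` with `g₂₂ = 𝟙 N₂`.
-/

open CategoryTheory CategoryTheory.Limits CategoryTheory.Pretriangulated ZeroObject

universe v u

namespace CategoryTheory.Limits

variable {D : Type*} [Category D] [HasZeroMorphisms D]
  (F : WalkingPair → D) [HasBinaryBiproduct (F .left) (F .right)] [HasProduct F]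

noncomputable def biprodIsoPi : F .left ⊞ F .right ≅ ∏ᶜ F where
  hom := Pi.lift fun | .left => biprod.fst | .right => biprod.snd
  inv := biprod.lift (Pi.π F .left) (Pi.π F .right)
  hom_inv_id := by ext <;> simp
  inv_hom_id := by ext ⟨_ | _⟩ <;> simp

end CategoryTheory.Limits

namespace CategoryTheory.Pretriangulated

variable {C : Type u} [Category.{v} C] [Preadditive C] [HasZeroObject C] [HasShift C ℤ]
  [∀ n : ℤ, (shiftFunctor C n).Additive] [Pretriangulated C]

noncomputable def biprodTriangle (T₁ T₂ : Triangle C) : Triangle C :=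
  Triangle.mk (biprod.map T₁.mor₁ T₂.mor₁) (biprod.map T₁.mor₂ T₂.mor₂)
    (biprod.desc (T₁.mor₃ ≫ biprod.inl⟦(1 : ℤ)⟧') (T₂.mor₃ ≫ biprod.inr⟦(1 : ℤ)⟧'))

lemma biprodTriangle_distinguished (T₁ T₂ : Triangle C) (h₁ : T₁ ∈ distTriang C)
    (h₂ : T₂ ∈ distTriang C) : biprodTriangle T₁ T₂ ∈ distTriang C := by
  -- `(pairFunction T₁ T₂ .left).obj₁` is `T₁.obj₁` only after unfolding, which `simp` does not do.
  suffices ∀ T : WalkingPair → Triangle C, (∀ j, T j ∈ distTriang C) →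
      biprodTriangle (T .left) (T .right) ∈ distTriang C from
    this (pairFunction T₁ T₂) (by rintro (_ | _) <;> assumption)
  intro T hT
  have comm₁ : biprod.map (T .left).mor₁ (T .right).mor₁ ≫ (biprodIsoPi fun j => (T j).obj₂).hom =
      (biprodIsoPi fun j => (T j).obj₁).hom ≫ Limits.Pi.map fun j => (T j).mor₁ := by
    ext ⟨_ | _⟩ <;> simp [biprodIsoPi]
  have comm₂ : biprod.map (T .left).mor₂ (T .right).mor₂ ≫ (biprodIsoPi fun j => (T j).obj₃).hom =
      (biprodIsoPi fun j => (T j).obj₂).hom ≫ Limits.Pi.map fun j => (T j).mor₂ := by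
    ext ⟨_ | _⟩ <;> simp [biprodIsoPi]
  have comm₃ : biprod.desc ((T .left).mor₃ ≫ biprod.inl⟦(1 : ℤ)⟧')
        ((T .right).mor₃ ≫ biprod.inr⟦(1 : ℤ)⟧') ≫ (biprodIsoPi fun j => (T j).obj₁).hom⟦(1 : ℤ)⟧' =
      (biprodIsoPi fun j => (T j).obj₃).hom ≫ (Limits.Pi.map fun j => (T j).mor₃) ≫
        inv (piComparison (shiftFunctor C (1 : ℤ)) fun j => (T j).obj₁) := by
    rw [← cancel_mono (piComparison _ _)]
    ext ⟨_ | _⟩ <;> simp [biprodIsoPi, ← Functor.map_comp]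
  exact isomorphic_distinguished _ (productTriangle_distinguished T hT) _
    (Triangle.isoMk _ _ (biprodIsoPi fun j => (T j).obj₁) (biprodIsoPi fun j => (T j).obj₂)
      (biprodIsoPi fun j => (T j).obj₃) comm₁ comm₂ comm₃)

lemma biprod_lift_zero_distinguished (T : Triangle C) (hT : T ∈ distTriang C) (N : C) :
    Triangle.mk (biprod.lift T.mor₁ (0 : T.obj₁ ⟶ N)) (biprod.map T.mor₂ (𝟙 N))
      (biprod.desc T.mor₃ 0) ∈ distTriang C := by
  have comm₁ : biprod.lift T.mor₁ (0 : T.obj₁ ⟶ N) ≫ 𝟙 _ =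
      biprod.inl ≫ biprod.map T.mor₁ (0 : (0 : C) ⟶ N) := by
    ext <;> simp
  have comm₂ : biprod.map T.mor₂ (𝟙 N) ≫ 𝟙 _ = 𝟙 _ ≫ biprod.map T.mor₂ (𝟙 N) := by simp
  have comm₃ : biprod.desc T.mor₃ (0 : N ⟶ T.obj₁⟦(1 : ℤ)⟧) ≫
        (biprod.inl : T.obj₁ ⟶ T.obj₁ ⊞ 0)⟦(1 : ℤ)⟧' =
      𝟙 _ ≫ biprod.desc (T.mor₃ ≫ biprod.inl⟦(1 : ℤ)⟧') (0 ≫ biprod.inr⟦(1 : ℤ)⟧') := by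
    ext <;> simp
  exact isomorphic_distinguished _
    (biprodTriangle_distinguished T _ hT (contractible_distinguished₁ N)) _
    (Triangle.isoMk _ _ (isoBiprodZero (isZero_zero C)) (Iso.refl _) (Iso.refl _) comm₁ comm₂ comm₃)

end CategoryTheory.Pretriangulated

/-- a distinguished triangle whose first morphism has a zero component
splits off a contractible summand. -/
theorem stmt0 {k : Type*} [Field k] [Finite k]
    {C : Type u} [CategoryTheory.Category.{v} C] [Preadditive C] [CategoryTheory.Linear k C]
    [HasZeroObject C] [HasBinaryBiproducts C] [HasShift C ℤ]
    [∀ n : ℤ, (CategoryTheory.shiftFunctor C n).Additive] [Pretriangulated C]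
    [∀ X Y : C, FiniteDimensional k (X ⟶ Y)]
    (hloc : ∀ X : C, Indecomposable X → IsLocalRing (CategoryTheory.End X))
    {M N₁ N₂ L : C} (f₁ : M ⟶ N₁) (f₂ : M ⟶ N₂)
    (g : N₁ ⊞ N₂ ⟶ L) (h : L ⟶ M⟦(1 : ℤ)⟧)
    (hf₂ : f₂ = 0)
    (hT : Triangle.mk (biprod.lift f₁ f₂) g h ∈ distTriang C) :
    ∃ (L₁ L₂ : C) (g₁₁ : N₁ ⟶ L₁) (h₁ : L₁ ⟶ M⟦(1 : ℤ)⟧) (g₂₂ : N₂ ⟶ L₂),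
      IsIso g₂₂ ∧
      Triangle.mk f₁ g₁₁ h₁ ∈ (distTriang C) ∧
      ∃ e : L ≅ L₁ ⊞ L₂,
        g ≫ e.hom = biprod.map g₁₁ g₂₂ ∧
        h = e.hom ≫ biprod.desc h₁ 0 := by
  subst hf₂
  obtain ⟨L₁, g₁₁, h₁, hT₁⟩ := distinguished_cocone_triangle f₁
  obtain ⟨e, he₁, he₂⟩ := exists_iso_of_arrow_iso _ _ hT
    (biprod_lift_zero_distinguished _ hT₁ N₂) (Iso.refl _)
  let e₃ : L ≅ L₁ ⊞ N₂ := Triangle.π₃.mapIso e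
  have comm₂ : g ≫ e₃.hom = 𝟙 (N₁ ⊞ N₂) ≫ biprod.map g₁₁ (𝟙 N₂) := by
    rw [show 𝟙 (N₁ ⊞ N₂) = e.hom.hom₂ from he₂.symm]
    exact e.hom.comm₂
  have comm₃ : h ≫ (𝟙 M)⟦(1 : ℤ)⟧' = e₃.hom ≫ biprod.desc h₁ 0 := by
    rw [show 𝟙 M = e.hom.hom₁ from he₁.symm]
    exact e.hom.comm₃
  rw [Category.id_comp] at comm₂
  rw [CategoryTheory.Functor.map_id, Category.comp_id] at comm₃
  exact ⟨L₁, N₂, g₁₁, h₁, 𝟙 N₂, inferInstance, hT₁, e₃, comm₂, comm₃⟩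
end

section
/- Let Z --l--> M --m--> L --n--> Z[1] be a distinguished triangle in C, and set nHom(Z[1],L) := {b in End(L) : b = nt for some t : Z[1] -> L}. Then the cardinality of nHom(Z[1],L) equals the rational number {M,L} / ({Z,L} · {L,L}); equivalently, |nHom(Z[1],L)| = prod_{i>0} |Hom(M[i],L)|^{(-1)^i} / ( |Hom(Z[i],L)|^{(-1)^i} · |Hom(L[i],L)|^{(-1)^i} ). -/
set_option linter.unusedSectionVars false
set_option maxHeartbeats 1000000

open CategoryTheory CategoryTheory.Limits CategoryTheory.Pretriangulated

universe v u

/-- `{X,Y} := ∏_{i>0} |Hom(X[i],Y)|^{(-1)^i}`, as a rational number. -/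
noncomputable def homAlternatingProd {C : Type u} [CategoryTheory.Category.{v} C]
    [HasShift C ℤ] (X Y : C) : ℚ :=
  ∏' i : ℕ, ((Nat.card (X⟦(i : ℤ) + 1⟧ ⟶ Y) : ℚ) ^ ((-1 : ℤ) ^ (i + 1)))

lemma card_eq_range_mul_ker' {G H : Type*} [AddGroup G] [AddGroup H] (f : G →+ H) :
    Nat.card G = Nat.card f.range * Nat.card f.ker := by
  rw [AddSubgroup.card_eq_card_quotient_mul_card_addSubgroup f.ker]
  congr 1
  exact Nat.card_congr (QuotientAddGroup.quotientKerEquivRange f).toEquiv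

lemma telescope_aux (e c : ℕ → ℕ) (he : ∀ j, e j * e (j+1) = c (j+1))
    (hepos : ∀ j, 0 < e j) (hcpos : ∀ j, 0 < c j) (K : ℕ) :
    (e 2 : ℚ) = (∏ a ∈ Finset.range K,
        ((c (3*a+3) : ℚ) * c (3*a+5) / c (3*a+4)) ^ ((-1:ℤ)^a)) *
      (e (3*K+2) : ℚ) ^ ((-1:ℤ)^K) := by
  induction K with
  | zero => simp
  | succ K ih =>
    have htrip : e (3*K+2) * e (3*K+5) * c (3*K+4) = c (3*K+3) * c (3*K+5) := by
      have h1 := he (3*K+2); have h2 := he (3*K+3); have h3 := he (3*K+4)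
      rw [show 3*K+2+1 = 3*K+3 by ring] at h1
      rw [show 3*K+3+1 = 3*K+4 by ring] at h2
      rw [show 3*K+4+1 = 3*K+5 by ring] at h3
      rw [← h1, ← h2, ← h3]; ring
    have hq : (e (3*K+2) : ℚ) * e (3*K+5) * c (3*K+4) = (c (3*K+3) : ℚ) * c (3*K+5) := by
      exact_mod_cast htrip
    have hc3 : (c (3*K+3) : ℚ) ≠ 0 := by exact_mod_cast (hcpos (3*K+3)).ne'
    have hc4 : (c (3*K+4) : ℚ) ≠ 0 := by exact_mod_cast (hcpos (3*K+4)).ne'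
    have hc5 : (c (3*K+5) : ℚ) ≠ 0 := by exact_mod_cast (hcpos (3*K+5)).ne'
    have he2 : (e (3*K+2) : ℚ) ≠ 0 := by exact_mod_cast (hepos (3*K+2)).ne'
    have he5 : (e (3*K+5) : ℚ) ≠ 0 := by exact_mod_cast (hepos (3*K+5)).ne'
    rw [ih, Finset.prod_range_succ, mul_assoc]
    congr 1
    rw [show 3*(K+1)+2 = 3*K+5 by ring]
    rcases Nat.even_or_odd K with hK | hK
    · rw [hK.neg_one_pow, (by simpa using hK.add_one : Odd (K+1)).neg_one_pow]
      simp only [zpow_one, zpow_neg_one]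
      field_simp
      linear_combination hq
    · rw [hK.neg_one_pow, (by simpa using hK.add_one : Even (K+1)).neg_one_pow]
      simp only [zpow_one, zpow_neg_one]
      field_simp
      linear_combination -hq

section aux
variable {C : Type u} [CategoryTheory.Category.{v} C] [Preadditive C]
    [HasZeroObject C] [HasShift C ℤ]
    [∀ n : ℤ, (CategoryTheory.shiftFunctor C n).Additive] [Pretriangulated C]

/-- iterated shift by 1 -/
def iterShift : ℕ → C → C
  | 0, X => X
  | (j+1), X => (iterShift j X)⟦(1:ℤ)⟧

noncomputable def iterShiftIso : ∀ (j : ℕ) (X : C), iterShift j X ≅ X⟦(j : ℤ)⟧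
  | 0, X => (shiftFunctorZero C ℤ).symm.app X
  | (j+1), X => (shiftFunctor C (1:ℤ)).mapIso (iterShiftIso j X) ≪≫
      ((shiftFunctorAdd' C (j:ℤ) 1 ((j+1 : ℕ) : ℤ) (by push_cast; ring)).symm.app X)

lemma iterShift_card (j : ℕ) (X Y : C) :
    Nat.card (iterShift j X ⟶ Y) = Nat.card (X⟦(j:ℤ)⟧ ⟶ Y) :=
  Nat.card_congr ((iterShiftIso j X).homCongr (Iso.refl Y))

lemma iterShift_zero {j : ℕ} {X Y : C} (h : ∀ f : X⟦(j:ℤ)⟧ ⟶ Y, f = 0)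
    (f : iterShift j X ⟶ Y) : f = 0 := by
  have : f = (iterShiftIso j X).hom ≫ ((iterShiftIso j X).inv ≫ f) := by simp
  rw [this, h ((iterShiftIso j X).inv ≫ f), Limits.comp_zero]

/-- rotation sequence of a triangle -/
def Tseq {Z M L : C} (l : Z ⟶ M) (m : M ⟶ L) (n : L ⟶ Z⟦(1 : ℤ)⟧) : ℕ → Triangle C
  | 0 => Triangle.mk l m n
  | (j+1) => (Tseq l m n j).rotate

lemma keycount (L : C) [∀ X Y : C, Finite (X ⟶ Y)] (T : Triangle C) (hT : T ∈ distTriang C) :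
    Nat.card {b : T.obj₁ ⟶ L // ∃ t : T.obj₂ ⟶ L, b = T.mor₁ ≫ t} *
      Nat.card {b : T.obj₂ ⟶ L // ∃ t : T.obj₃ ⟶ L, b = T.mor₂ ≫ t} =
      Nat.card (T.obj₂ ⟶ L) := by
  let φ : (T.obj₂ ⟶ L) →+ (T.obj₁ ⟶ L) :=
    AddMonoidHom.mk' (fun t => T.mor₁ ≫ t) (fun a b => Preadditive.comp_add _ _ _ _ _ _)
  rw [card_eq_range_mul_ker' φ]
  congr 1
  · refine Nat.card_congr (Equiv.subtypeEquivRight fun b => ?_)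
    simp only [AddMonoidHom.mem_range, φ, AddMonoidHom.mk'_apply]
    exact ⟨fun ⟨t, h⟩ => ⟨t, h.symm⟩, fun ⟨t, h⟩ => ⟨t, h.symm⟩⟩
  · refine Nat.card_congr (Equiv.subtypeEquivRight fun b => ?_)
    simp only [AddMonoidHom.mem_ker, φ, AddMonoidHom.mk'_apply]
    constructor
    · rintro ⟨t, rfl⟩
      rw [← Category.assoc, comp_distTriang_mor_zero₁₂ T hT, Limits.zero_comp]
    · intro h
      exact Triangle.yoneda_exact₂ T hT b h

lemma cardone_sub (L : C) (T : Triangle C) (h : ∀ t : T.obj₂ ⟶ L, t = 0) :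
    Nat.card {b : T.obj₁ ⟶ L // ∃ t : T.obj₂ ⟶ L, b = T.mor₁ ≫ t} = 1 := by
  haveI : Unique {b : T.obj₁ ⟶ L // ∃ t : T.obj₂ ⟶ L, b = T.mor₁ ≫ t} := by
    refine ⟨⟨⟨0, 0, by simp⟩⟩, ?_⟩
    rintro ⟨b, t, rfl⟩
    apply Subtype.ext
    show T.mor₁ ≫ t = 0
    rw [h t, Limits.comp_zero]
  exact Nat.card_unique

lemma cardone_hom {A Y : C} (h : ∀ f : A ⟶ Y, f = 0) : Nat.card (A ⟶ Y) = 1 := by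
  haveI : Unique (A ⟶ Y) := ⟨⟨0⟩, h⟩
  exact Nat.card_unique

end aux

theorem stmt2 {k : Type*} [Field k] [Finite k]
    {C : Type u} [CategoryTheory.Category.{v} C] [Preadditive C] [CategoryTheory.Linear k C]
    [HasZeroObject C] [HasBinaryBiproducts C] [HasShift C ℤ]
    [∀ n : ℤ, (CategoryTheory.shiftFunctor C n).Additive] [Pretriangulated C]
    [∀ X Y : C, FiniteDimensional k (X ⟶ Y)]
    (hloc : ∀ X : C, Indecomposable X → IsLocalRing (CategoryTheory.End X))
    (hhfin : ∀ X Y : C, ∃ N : ℕ, ∀ i ≥ N, ∀ f : X⟦(i : ℤ)⟧ ⟶ Y, f = 0)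
    {Z M L : C} (l : Z ⟶ M) (m : M ⟶ L) (n : L ⟶ Z⟦(1 : ℤ)⟧)
    (hT : Triangle.mk l m n ∈ distTriang C) :
    (Nat.card {b : L ⟶ L // ∃ t : Z⟦(1 : ℤ)⟧ ⟶ L, b = n ≫ t} : ℚ) =
      homAlternatingProd M L / (homAlternatingProd Z L * homAlternatingProd L L) := by
  haveI instF : ∀ X Y : C, Finite (X ⟶ Y) := fun X Y => Module.finite_of_finite (R := k)
  set T : ℕ → Triangle C := Tseq l m n with hTdef
  have hTd : ∀ j, T j ∈ distTriang C := by
    intro j; induction j with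
    | zero => exact hT
    | succ j ih => exact rot_of_distTriang _ ih
  set e : ℕ → ℕ := fun j =>
    Nat.card {b : (T j).obj₁ ⟶ L // ∃ t : (T j).obj₂ ⟶ L, b = (T j).mor₁ ≫ t} with hedef
  set c : ℕ → ℕ := fun j => Nat.card ((T j).obj₁ ⟶ L) with hcdef
  have he : ∀ j, e j * e (j+1) = c (j+1) := fun j => keycount L (T j) (hTd j)
  have hcpos : ∀ j, 0 < c j := by
    intro j
    haveI : Nonempty ((T j).obj₁ ⟶ L) := ⟨0⟩
    exact Nat.card_pos
  have hepos : ∀ j, 0 < e j := by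
    intro j
    haveI : Nonempty {b : (T j).obj₁ ⟶ L // ∃ t : (T j).obj₂ ⟶ L, b = (T j).mor₁ ≫ t} :=
      ⟨⟨0, 0, by simp⟩⟩
    exact Nat.card_pos
  -- object identifications
  have hstep : ∀ j, (T (j+3)).obj₁ = ((T j).obj₁)⟦(1:ℤ)⟧ := fun _ => rfl
  have hZ : ∀ a, (T (3*a+3)).obj₁ = iterShift (a+1) Z := by
    intro a; induction a with
    | zero => rfl
    | succ a ih =>
      rw [show 3*(a+1)+3 = (3*a+3)+3 by ring, hstep (3*a+3), ih]; rfl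
  have hM : ∀ a, (T (3*a+4)).obj₁ = iterShift (a+1) M := by
    intro a; induction a with
    | zero => rfl
    | succ a ih =>
      rw [show 3*(a+1)+4 = (3*a+4)+3 by ring, hstep (3*a+4), ih]; rfl
  have hL : ∀ a, (T (3*a+5)).obj₁ = iterShift (a+1) L := by
    intro a; induction a with
    | zero => rfl
    | succ a ih =>
      rw [show 3*(a+1)+5 = (3*a+5)+3 by ring, hstep (3*a+5), ih]; rfl
  have hc3 : ∀ a, c (3*a+3) = Nat.card (Z⟦(a:ℤ)+1⟧ ⟶ L) := by
    intro a
    show Nat.card ((T (3*a+3)).obj₁ ⟶ L) = _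
    rw [hZ a, iterShift_card]
    congr 2
  have hc4 : ∀ a, c (3*a+4) = Nat.card (M⟦(a:ℤ)+1⟧ ⟶ L) := by
    intro a
    show Nat.card ((T (3*a+4)).obj₁ ⟶ L) = _
    rw [hM a, iterShift_card]
    congr 2
  have hc5 : ∀ a, c (3*a+5) = Nat.card (L⟦(a:ℤ)+1⟧ ⟶ L) := by
    intro a
    show Nat.card ((T (3*a+5)).obj₁ ⟶ L) = _
    rw [hL a, iterShift_card]
    congr 2
  -- bounds
  obtain ⟨NZ, hNZ⟩ := hhfin Z L
  obtain ⟨NM, hNM⟩ := hhfin M L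
  obtain ⟨NL, hNL⟩ := hhfin L L
  set K0 := max (max NZ NM) NL with hK0
  have hNZK : NZ ≤ K0 := (le_max_left _ _).trans (le_max_left _ _)
  have hNMK : NM ≤ K0 := (le_max_right _ _).trans (le_max_left _ _)
  have hNLK : NL ≤ K0 := le_max_right _ _
  -- vanishing of the tail
  have hFK : e (3*K0+2) = 1 := by
    apply cardone_sub L (T (3*K0+2))
    show ∀ t : (T (3*K0+3)).obj₁ ⟶ L, t = 0
    rw [hZ K0]
    exact iterShift_zero (hNZ (K0+1) (by omega))
  -- truncation of infinite products
  have htr : ∀ (X : C) (N : ℕ), (∀ i ≥ N, ∀ f : X⟦(i:ℤ)⟧ ⟶ L, f = 0) → N ≤ K0 →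
      homAlternatingProd X L = ∏ i ∈ Finset.range K0,
        ((Nat.card (X⟦(i:ℤ)+1⟧ ⟶ L) : ℚ) ^ ((-1:ℤ)^(i+1))) := by
    intro X N hN hNK
    apply tprod_eq_prod
    intro i hi
    simp only [Finset.mem_range, not_lt] at hi
    have h1 : Nat.card (X⟦(i:ℤ)+1⟧ ⟶ L) = 1 := by
      apply cardone_hom
      rw [show ((i:ℤ)+1) = ((i+1:ℕ):ℤ) by push_cast; ring]
      exact hN (i+1) (by omega)
    rw [h1]
    simp
  -- assemble
  have hLHS : Nat.card {b : L ⟶ L // ∃ t : Z⟦(1 : ℤ)⟧ ⟶ L, b = n ≫ t} = e 2 := rfl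
  rw [hLHS, telescope_aux e c he hepos hcpos K0, hFK]
  simp only [Nat.cast_one, one_zpow, mul_one]
  rw [htr Z NZ hNZ hNZK, htr M NM hNM hNMK, htr L NL hNL hNLK,
    ← Finset.prod_mul_distrib, ← Finset.prod_div_distrib]
  apply Finset.prod_congr rfl
  intro a _
  rw [hc3 a, hc4 a, hc5 a]
  have hA : ((Nat.card (Z⟦(a:ℤ)+1⟧ ⟶ L) : ℚ)) ≠ 0 := by
    haveI : Nonempty (Z⟦(a:ℤ)+1⟧ ⟶ L) := ⟨0⟩
    exact_mod_cast Nat.card_pos.ne'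
  have hB : ((Nat.card (M⟦(a:ℤ)+1⟧ ⟶ L) : ℚ)) ≠ 0 := by
    haveI : Nonempty (M⟦(a:ℤ)+1⟧ ⟶ L) := ⟨0⟩
    exact_mod_cast Nat.card_pos.ne'
  have hC : ((Nat.card (L⟦(a:ℤ)+1⟧ ⟶ L) : ℚ)) ≠ 0 := by
    haveI : Nonempty (L⟦(a:ℤ)+1⟧ ⟶ L) := ⟨0⟩
    exact_mod_cast Nat.card_pos.ne'
  rcases Nat.even_or_odd a with ha | ha
  · rw [ha.neg_one_pow, (by simpa using ha.add_one : Odd (a+1)).neg_one_pow]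
    simp only [zpow_one, zpow_neg_one]
    field_simp
  · rw [ha.neg_one_pow, (by simpa using ha.add_one : Even (a+1)).neg_one_pow]
    simp only [zpow_one, zpow_neg_one]
    field_simp
end

section
/- Let Z --l--> M --m--> L --n--> Z[1] be a distinguished triangle in C, and set Hom(Z[1],L)n := {d in End(Z[1]) : d = sn for some s : Z[1] -> L}. Then the cardinality of Hom(Z[1],L)n equals the rational number {Z,M} / ({Z,L} · {Z,Z}); equivalently, |Hom(Z[1],L)n| = prod_{i>0} |Hom(Z[i],M)|^{(-1)^i} / ( |Hom(Z[i],L)|^{(-1)^i} · |Hom(Z[i],Z)|^{(-1)^i} ). -/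
open CategoryTheory CategoryTheory.Limits CategoryTheory.Pretriangulated

universe v u

lemma stmt3_card_eq_range_mul_ker {A B : Type*} [AddGroup A] [AddGroup B] (f : A →+ B) :
    Nat.card A = Nat.card f.range * Nat.card f.ker := by
  rw [AddSubgroup.card_eq_card_quotient_mul_card_addSubgroup f.ker]
  congr 1
  exact Nat.card_congr (QuotientAddGroup.quotientKerEquivRange f).toEquiv

lemma stmt3_nat_card_eq_one_of_forall_zero {A : Type*} (a0 : A) (h : ∀ a : A, a = a0) :
    Nat.card A = 1 :=
  Nat.card_eq_one_iff_unique.mpr ⟨⟨fun a b => by rw [h a, h b]⟩, ⟨a0⟩⟩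

lemma stmt3_nat_card_pos_of_zero {A : Type*} [Zero A] [Finite A] : 0 < Nat.card A := by
  haveI : Nonempty A := ⟨0⟩
  exact Nat.card_pos

/-- abstract telescoping lemma -/
lemma stmt3_telescope (g A : ℤ → ℚ) (hg : ∀ j : ℤ, g j ≠ 0)
    (hrec : ∀ j : ℤ, g j * g (j + 1) = A j) (N : ℕ)
    (hbase : ∀ i : ℕ, N ≤ i → g (i : ℤ) = 1) :
    ∀ t : ℕ, ∀ i : ℕ, N ≤ i + t →
      g (i : ℤ) = ∏ r ∈ Finset.range t, (A ((i : ℤ) + (r : ℕ)) ^ ((-1 : ℤ) ^ r)) := by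
  intro t
  induction t with
  | zero => intro i hi; simpa using hbase i (by omega)
  | succ t ih =>
    intro i hi
    have hgi : g ((i : ℤ) + 1) = g (((i + 1 : ℕ)) : ℤ) := by push_cast; ring_nf
    have h1 : g (i : ℤ) = A (i : ℤ) / g ((i : ℤ) + 1) := by
      rw [eq_div_iff (hg _)]; exact hrec _
    rw [Finset.prod_range_succ']
    have hprod : (∏ r ∈ Finset.range t, A ((i : ℤ) + ((r + 1 : ℕ) : ℤ)) ^ ((-1 : ℤ) ^ (r + 1)))
        = (∏ r ∈ Finset.range t, A ((((i + 1 : ℕ)) : ℤ) + (r : ℕ)) ^ ((-1 : ℤ) ^ r))⁻¹ := by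
      rw [← Finset.prod_inv_distrib]
      refine Finset.prod_congr rfl (fun r _ => ?_)
      have e1 : (i : ℤ) + ((r + 1 : ℕ) : ℤ) = (((i + 1 : ℕ)) : ℤ) + (r : ℕ) := by
        push_cast; ring
      have e2 : ((-1 : ℤ)) ^ (r + 1) = -((-1 : ℤ) ^ r) := by rw [pow_succ]; ring
      rw [e1, e2, zpow_neg]
    rw [hprod, ← ih (i + 1) (by omega)]
    simp only [Nat.cast_zero, add_zero, pow_zero, zpow_one]
    rw [h1, hgi, div_eq_mul_inv, mul_comm]

section
variable {C : Type u} [CategoryTheory.Category.{v} C] [Preadditive C]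
    [HasZeroObject C] [HasShift C ℤ]
    [∀ n : ℤ, (CategoryTheory.shiftFunctor C n).Additive] [Pretriangulated C]

/-- the cardinality of the set of maps `Z⟦j⟧ ⟶ Z⟦1⟧` factoring through `n`. -/
noncomputable def stmt3gS {Z L : C} (n : L ⟶ Z⟦(1 : ℤ)⟧) (j : ℤ) : ℕ :=
  Nat.card {d : Z⟦j⟧ ⟶ Z⟦(1 : ℤ)⟧ // ∃ s : Z⟦j⟧ ⟶ L, d = s ≫ n}

lemma stmt3_key {Z M L : C} (l : Z ⟶ M) (m : M ⟶ L) (n : L ⟶ Z⟦(1 : ℤ)⟧)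
    (hT : Triangle.mk l m n ∈ distTriang C) (j : ℤ) :
    stmt3gS n j * stmt3gS n (j + 1) * Nat.card (Z⟦j⟧ ⟶ M)
    = Nat.card (Z⟦j⟧ ⟶ L) * Nat.card (Z⟦j⟧ ⟶ Z) := by
  let φn : (Z⟦j⟧ ⟶ L) →+ (Z⟦j⟧ ⟶ Z⟦(1:ℤ)⟧) :=
    AddMonoidHom.mk' (fun s => s ≫ n) (fun x y => Preadditive.add_comp _ _ _ _ _ _)
  let φm : (Z⟦j⟧ ⟶ M) →+ (Z⟦j⟧ ⟶ L) :=
    AddMonoidHom.mk' (fun s => s ≫ m) (fun x y => Preadditive.add_comp _ _ _ _ _ _)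
  let φl : (Z⟦j⟧ ⟶ Z) →+ (Z⟦j⟧ ⟶ M) :=
    AddMonoidHom.mk' (fun s => s ≫ l) (fun x y => Preadditive.add_comp _ _ _ _ _ _)
  have hg1 : stmt3gS n j = Nat.card φn.range := by
    refine Nat.card_congr (Equiv.subtypeEquivRight (fun d => ?_))
    rw [AddMonoidHom.mem_range]
    constructor
    · rintro ⟨s, hs⟩; exact ⟨s, hs.symm⟩
    · rintro ⟨s, hs⟩; exact ⟨s, hs.symm⟩
  have h3 : φn.ker = φm.range := by
    ext d
    rw [AddMonoidHom.mem_ker, AddMonoidHom.mem_range]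
    constructor
    · intro hd
      obtain ⟨s, hs⟩ := Triangle.coyoneda_exact₃ _ hT d hd
      exact ⟨s, hs.symm⟩
    · rintro ⟨s, rfl⟩
      show (s ≫ m) ≫ n = 0
      have h0 : m ≫ n = 0 := comp_distTriang_mor_zero₂₃ _ hT
      rw [Category.assoc, h0, comp_zero]
  have h5 : φm.ker = φl.range := by
    ext d
    rw [AddMonoidHom.mem_ker, AddMonoidHom.mem_range]
    constructor
    · intro hd
      obtain ⟨s, hs⟩ := Triangle.coyoneda_exact₂ _ hT d hd
      exact ⟨s, hs.symm⟩
    · rintro ⟨s, rfl⟩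
      show (s ≫ l) ≫ m = 0
      have h0 : l ≫ m = 0 := comp_distTriang_mor_zero₁₂ _ hT
      rw [Category.assoc, h0, comp_zero]
  let ff := Functor.FullyFaithful.ofFullyFaithful (shiftFunctor C (1:ℤ))
  let α : (Z⟦j+1⟧ : C) ≅ (Z⟦j⟧)⟦(1:ℤ)⟧ := (shiftFunctorAdd' C j 1 (j+1) rfl).app Z
  let e : (Z⟦j⟧ ⟶ Z) ≃ ((Z⟦j+1⟧ : C) ⟶ Z⟦(1:ℤ)⟧) :=
    ff.homEquiv.trans ⟨fun h => α.hom ≫ h, fun h => α.inv ≫ h,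
      fun h => by simp, fun h => by simp⟩
  have h7 : Nat.card φl.ker = stmt3gS n (j + 1) := by
    refine Nat.card_congr (Equiv.subtypeEquiv e (fun f => ?_))
    rw [AddMonoidHom.mem_ker]
    have he : e f = α.hom ≫ f⟦(1:ℤ)⟧' := rfl
    constructor
    · intro hf
      have hf' : f ≫ l = 0 := hf
      rw [he]
      refine Triangle.coyoneda_exact₁ _ hT (α.hom ≫ f⟦(1:ℤ)⟧') ?_
      show (α.hom ≫ f⟦(1:ℤ)⟧') ≫ l⟦(1:ℤ)⟧' = 0
      rw [Category.assoc, ← Functor.map_comp, hf', Functor.map_zero, comp_zero]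
    · rintro ⟨s, hs⟩
      rw [he] at hs
      have hnl : n ≫ l⟦(1:ℤ)⟧' = 0 := comp_distTriang_mor_zero₃₁ _ hT
      have h0 : (α.hom ≫ f⟦(1:ℤ)⟧') ≫ l⟦(1:ℤ)⟧' = 0 := by
        rw [hs, Category.assoc, hnl, comp_zero]
      rw [Category.assoc, ← Functor.map_comp] at h0
      have h1 : ((f ≫ l)⟦(1:ℤ)⟧' : _) = 0 := by
        rw [← cancel_epi α.hom, comp_zero]; exact h0
      have h2 : f ≫ l = 0 := (shiftFunctor C (1:ℤ)).map_injective (by rw [h1]; simp)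
      exact h2
  have hc : Nat.card (Z⟦j⟧ ⟶ L) = Nat.card φn.range * Nat.card φn.ker :=
    stmt3_card_eq_range_mul_ker φn
  have hb : Nat.card (Z⟦j⟧ ⟶ M) = Nat.card φm.range * Nat.card φm.ker :=
    stmt3_card_eq_range_mul_ker φm
  have ha : Nat.card (Z⟦j⟧ ⟶ Z) = Nat.card φl.range * Nat.card φl.ker :=
    stmt3_card_eq_range_mul_ker φl
  rw [hg1, ← h7, hc, hb, ha, h3, h5]
  ring

end

theorem stmt3 {k : Type*} [Field k] [Finite k]
    {C : Type u} [CategoryTheory.Category.{v} C] [Preadditive C] [CategoryTheory.Linear k C]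
    [HasZeroObject C] [HasBinaryBiproducts C] [HasShift C ℤ]
    [∀ n : ℤ, (CategoryTheory.shiftFunctor C n).Additive] [Pretriangulated C]
    [∀ X Y : C, FiniteDimensional k (X ⟶ Y)]
    (hloc : ∀ X : C, Indecomposable X → IsLocalRing (CategoryTheory.End X))
    (hhfin : ∀ X Y : C, ∃ N : ℕ, ∀ i ≥ N, ∀ f : X⟦(i : ℤ)⟧ ⟶ Y, f = 0)
    {Z M L : C} (l : Z ⟶ M) (m : M ⟶ L) (n : L ⟶ Z⟦(1 : ℤ)⟧)
    (hT : Triangle.mk l m n ∈ distTriang C) :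
    (Nat.card {d : Z⟦(1 : ℤ)⟧ ⟶ Z⟦(1 : ℤ)⟧ // ∃ s : Z⟦(1 : ℤ)⟧ ⟶ L, d = s ≫ n} : ℚ) =
      homAlternatingProd Z M / (homAlternatingProd Z L * homAlternatingProd Z Z) := by
  classical
  haveI hfin : ∀ X Y : C, Finite (X ⟶ Y) := fun X Y => Module.finite_of_finite k
  obtain ⟨N₁, h₁⟩ := hhfin Z Z
  obtain ⟨N₂, h₂⟩ := hhfin Z M
  obtain ⟨N₃, h₃⟩ := hhfin Z L
  obtain ⟨N₄, h₄⟩ := hhfin Z (Z⟦(1 : ℤ)⟧)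
  set N : ℕ := max (max N₁ N₂) (max N₃ N₄) with hN
  -- positivity
  have hLpos : ∀ j : ℤ, (0 : ℚ) < Nat.card (Z⟦j⟧ ⟶ L) := fun j => by
    exact_mod_cast stmt3_nat_card_pos_of_zero
  have hMpos : ∀ j : ℤ, (0 : ℚ) < Nat.card (Z⟦j⟧ ⟶ M) := fun j => by
    exact_mod_cast stmt3_nat_card_pos_of_zero
  have hZpos : ∀ j : ℤ, (0 : ℚ) < Nat.card (Z⟦j⟧ ⟶ Z) := fun j => by
    exact_mod_cast stmt3_nat_card_pos_of_zero
  have hgpos : ∀ j : ℤ, (0 : ℚ) < stmt3gS n j := fun j => by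
    haveI : Nonempty {d : Z⟦j⟧ ⟶ Z⟦(1 : ℤ)⟧ // ∃ s : Z⟦j⟧ ⟶ L, d = s ≫ n} :=
      ⟨⟨0, 0, (Limits.zero_comp).symm⟩⟩
    exact_mod_cast Nat.card_pos
  -- the rational recursion
  set A : ℤ → ℚ := fun j =>
    ((Nat.card (Z⟦j⟧ ⟶ L) : ℚ) * (Nat.card (Z⟦j⟧ ⟶ Z) : ℚ)) / (Nat.card (Z⟦j⟧ ⟶ M) : ℚ)
    with hA
  have hrec : ∀ j : ℤ, (stmt3gS n j : ℚ) * (stmt3gS n (j + 1) : ℚ) = A j := by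
    intro j
    rw [hA]
    rw [eq_div_iff (ne_of_gt (hMpos j))]
    exact_mod_cast stmt3_key l m n hT j
  have hbase : ∀ i : ℕ, N ≤ i → ((stmt3gS n (i : ℤ) : ℚ)) = 1 := by
    intro i hi
    have hz : ∀ f : Z⟦(i : ℤ)⟧ ⟶ Z⟦(1 : ℤ)⟧, f = 0 := h₄ i (by omega)
    have : stmt3gS n (i : ℤ) = 1 := by
      refine stmt3_nat_card_eq_one_of_forall_zero ⟨0, 0, (Limits.zero_comp).symm⟩ ?_
      rintro ⟨d, s, hs⟩
      refine Subtype.ext ?_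
      show d = 0
      exact hz d
    rw [this]; norm_num
  have main : (stmt3gS n (((1 : ℕ)) : ℤ) : ℚ)
      = ∏ r ∈ Finset.range N, A ((((1 : ℕ)) : ℤ) + (r : ℕ)) ^ ((-1 : ℤ) ^ r) :=
    stmt3_telescope (fun j => (stmt3gS n j : ℚ)) A
      (fun j => ne_of_gt (hgpos j)) hrec N hbase N 1 (by omega)
  rw [Nat.cast_one] at main
  have main2 : (stmt3gS n (1 : ℤ) : ℚ)
      = ∏ r ∈ Finset.range N, A ((r : ℤ) + 1) ^ ((-1 : ℤ) ^ r) := by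
    rw [main]
    exact Finset.prod_congr rfl (fun r _ => by rw [add_comm (1 : ℤ) (r : ℤ)])
  -- the three infinite products as finite products
  have hconv : ∀ (Y : C) (NY : ℕ), NY ≤ N → (∀ i ≥ NY, ∀ f : Z⟦(i : ℤ)⟧ ⟶ Y, f = 0) →
      homAlternatingProd Z Y
        = ∏ r ∈ Finset.range N, ((Nat.card (Z⟦(r : ℤ) + 1⟧ ⟶ Y) : ℚ) ^ ((-1 : ℤ) ^ (r + 1))) := by
    intro Y NY hNY hY
    refine tprod_eq_prod ?_
    intro r hr
    rw [Finset.mem_range, not_lt] at hr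
    have hcast : ((r : ℤ) + 1) = (((r + 1 : ℕ)) : ℤ) := by push_cast; ring
    rw [hcast, stmt3_nat_card_eq_one_of_forall_zero 0 (hY (r + 1) (by omega))]
    norm_num
  rw [hconv M N₂ (by omega) h₂, hconv L N₃ (by omega) h₃, hconv Z N₁ (by omega) h₁]
  show (stmt3gS n (1 : ℤ) : ℚ) = _
  rw [main2, ← Finset.prod_mul_distrib, ← Finset.prod_div_distrib]
  refine Finset.prod_congr rfl (fun r _ => ?_)
  have e2 : ((-1 : ℤ)) ^ (r + 1) = -((-1 : ℤ) ^ r) := by rw [pow_succ]; ring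
  rw [hA]
  have hx : ((Nat.card (Z⟦(r : ℤ) + 1⟧ ⟶ L) : ℚ)) ^ ((-1 : ℤ) ^ r) ≠ 0 :=
    zpow_ne_zero _ (ne_of_gt (hLpos _))
  have hy : ((Nat.card (Z⟦(r : ℤ) + 1⟧ ⟶ Z) : ℚ)) ^ ((-1 : ℤ) ^ r) ≠ 0 :=
    zpow_ne_zero _ (ne_of_gt (hZpos _))
  have hz : ((Nat.card (Z⟦(r : ℤ) + 1⟧ ⟶ M) : ℚ)) ^ ((-1 : ℤ) ^ r) ≠ 0 :=
    zpow_ne_zero _ (ne_of_gt (hMpos _))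
  rw [e2, zpow_neg, zpow_neg, zpow_neg, div_zpow, mul_zpow]
  field_simp
end

section
/- Let Z --l--> M --m--> L --n--> Z[1] be a distinguished triangle in C, and suppose given direct sum decompositions L = L1 ⊕ L2 and Z[1] = Z1' ⊕ Z2' with respect to which n = diag(n11, n22), where n11 : L1 -> Z1' is an isomorphism and n22 : L2 -> Z2' belongs to radHom(L2, Z2'). Then the stabilizer {b in Aut(L) : mb = m} of m under right composition by automorphisms of L has cardinality |nHom(Z[1],L)| · |Aut(L1)| / |End(L1)|, where nHom(Z[1],L) := {b in End(L) : b = nt for some t : Z[1] -> L}. -/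
/-
For `b ∈ End L`, exactness of `Hom(-, L)` on the triangle shows `m ≫ b = m` iff `b - 1 = n ≫ t`
for some `t : Z⟦1⟧ ⟶ L`, so the stabilizer is in bijection with the `r ∈ nHom(Z⟦1⟧, L)` for
which `1 + r` is invertible.

Radical endomorphisms `r` have `1 + r` invertible: by induction on `|End X|`, either `X` is
indecomposable and this is the local ring property, or `X` splits into two nonzero summands, and
Gaussian elimination against the invertible diagonal block reduces to the smaller summands.

Writing `n ≫ t` in the two decompositions, the `L₂`-diagonal block of `1 + n ≫ t` is
`1 + n₂₂ t₂₂`, invertible since `n₂₂` is radical, and the Schur complement is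
`1 + n₁₁ t₁₁ + (radical)`. So `1 + n ≫ t` is invertible iff `1 + n₁₁ t₁₁` is. As `n₁₁` is an
isomorphism, `t ↦ n₁₁ t₁₁` maps `Hom(Z⟦1⟧, L)` onto `End L₁`, and comparing fibre sizes of the
additive maps `t ↦ n ≫ t` and `t ↦ n₁₁ t₁₁` gives the formula.
-/

open CategoryTheory CategoryTheory.Limits CategoryTheory.Pretriangulated

universe v u

def radHom {C : Type u} [CategoryTheory.Category.{v} C] [Preadditive C] [HasBinaryBiproducts C]
    (X Y : C) : Set (X ⟶ Y) :=
  {f | ∀ (A : C), Indecomposable A → ∀ (g : A ⟶ X) (h : Y ⟶ A), ¬ IsIso (g ≫ f ≫ h)}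

section Radical

variable {C : Type u} [Category.{v} C] [Preadditive C] [HasBinaryBiproducts C]

lemma comp_mem_radHom_left {X X' Y : C} (g : X' ⟶ X) {f : X ⟶ Y} (hf : f ∈ radHom X Y) :
    g ≫ f ∈ radHom X' Y := fun A hA u v h =>
  hf A hA (u ≫ g) v (by simpa only [Category.assoc] using h)

lemma comp_mem_radHom_right {X Y Y' : C} {f : X ⟶ Y} (hf : f ∈ radHom X Y) (g : Y ⟶ Y') :
    f ≫ g ∈ radHom X Y' := fun A hA u v h =>
  hf A hA u (g ≫ v) (by simpa only [Category.assoc] using h)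

lemma neg_mem_radHom {X Y : C} {f : X ⟶ Y} (hf : f ∈ radHom X Y) : -f ∈ radHom X Y := by
  intro A hA u v h
  have : IsIso (-𝟙 A) := ⟨⟨-𝟙 A, by simp, by simp⟩⟩
  exact hf A hA u v (by simpa using (inferInstance : IsIso ((u ≫ (-f) ≫ v) ≫ (-𝟙 A))))

lemma isIso_one_add_of_mem_radHom_of_indecomposable {X : C} (hX : Indecomposable X)
    [IsLocalRing (End X)] {r : X ⟶ X} (hr : r ∈ radHom X X) : IsIso (𝟙 X + r) := by
  let s : End X := r
  have hsum : IsUnit (1 + s + -s) := by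
    rw [add_neg_cancel_right]
    exact isUnit_one
  refine (IsLocalRing.isUnit_or_isUnit_of_isUnit_add hsum).elim (isUnit_iff_isIso _).1
    fun hneg => absurd ?_ (hr X hX (𝟙 X) (𝟙 X))
  simpa using (isUnit_iff_isIso _).1 hneg.neg

lemma isIso_add_iff_of_mem_radHom {X Y : C} (hY : ∀ s ∈ radHom Y Y, IsIso (𝟙 Y + s))
    (a : X ⟶ Y) {r : X ⟶ Y} (hr : r ∈ radHom X Y) : IsIso (a + r) ↔ IsIso a := by
  have key : ∀ (b s : X ⟶ Y), s ∈ radHom X Y → IsIso b → IsIso (b + s) := by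
    intro b s hs hb
    rw [show b + s = b ≫ (𝟙 Y + inv b ≫ s) by simp [Preadditive.comp_add]]
    have := hY _ (comp_mem_radHom_left (inv b) hs)
    infer_instance
  refine ⟨fun h => ?_, key a r hr⟩
  simpa using key _ _ (neg_mem_radHom hr) h

end Radical

section Gauss

variable {C : Type u} [Category.{v} C] [Preadditive C] [HasBinaryBiproducts C]

lemma Biprod.isIso_ofComponents_iff {X₁ X₂ Y₁ Y₂ : C} (f₁₁ : X₁ ⟶ Y₁) (f₁₂ : X₁ ⟶ Y₂)
    (f₂₁ : X₂ ⟶ Y₁) (f₂₂ : X₂ ⟶ Y₂) [IsIso f₂₂] :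
    IsIso (Biprod.ofComponents f₁₁ f₁₂ f₂₁ f₂₂) ↔ IsIso (f₁₁ - f₁₂ ≫ inv f₂₂ ≫ f₂₁) := by
  have hdiag : (Biprod.unipotentUpper (-(f₁₂ ≫ inv f₂₂))).hom ≫
      Biprod.ofComponents f₁₁ f₁₂ f₂₁ f₂₂ ≫ (Biprod.unipotentLower (-(inv f₂₂ ≫ f₂₁))).hom =
      biprod.map (f₁₁ - f₁₂ ≫ inv f₂₂ ≫ f₂₁) f₂₂ := by
    ext <;> simp [Biprod.ofComponents]; abel
  rw [← isIso_comp_left_iff (Biprod.unipotentUpper _).hom,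
    ← isIso_comp_right_iff _ (Biprod.unipotentLower _).hom, Category.assoc, hdiag]
  refine ⟨fun _ => isIso_left_of_isIso_biprod_map _ f₂₂, fun _ => ?_⟩
  exact (biprod.mapIso (asIso (f₁₁ - f₁₂ ≫ inv f₂₂ ≫ f₂₁)) (asIso f₂₂)).isIso_hom

lemma Biprod.isIso_iff_isIso_schurComplement {X₁ X₂ Y₁ Y₂ : C} (f : X₁ ⊞ X₂ ⟶ Y₁ ⊞ Y₂)
    [IsIso (biprod.inr ≫ f ≫ biprod.snd)] :
    IsIso f ↔ IsIso (biprod.inl ≫ f ≫ biprod.fst - (biprod.inl ≫ f ≫ biprod.snd) ≫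
      inv (biprod.inr ≫ f ≫ biprod.snd) ≫ biprod.inr ≫ f ≫ biprod.fst) := by
  conv_lhs => rw [← Biprod.ofComponents_eq f]
  exact Biprod.isIso_ofComponents_iff _ _ _ _

end Gauss

section RadicalUnits

variable {C : Type u} [Category.{v} C] [Preadditive C] [HasBinaryBiproducts C]

lemma Biprod.isIso_iff_isIso_fst_of_mem_radHom {X₁ X₂ Y₁ Y₂ : C}
    (hY₁ : ∀ s ∈ radHom Y₁ Y₁, IsIso (𝟙 Y₁ + s)) (f : X₁ ⊞ X₂ ⟶ Y₁ ⊞ Y₂)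
    [IsIso (biprod.inr ≫ f ≫ biprod.snd)] (h₂₁ : biprod.inr ≫ f ≫ biprod.fst ∈ radHom X₂ Y₁) :
    IsIso f ↔ IsIso (biprod.inl ≫ f ≫ biprod.fst) := by
  rw [Biprod.isIso_iff_isIso_schurComplement, sub_eq_add_neg,
    isIso_add_iff_of_mem_radHom hY₁ _
      (neg_mem_radHom (comp_mem_radHom_left _ (comp_mem_radHom_left _ h₂₁)))]

lemma isIso_one_add_of_mem_radHom_biprod {A B : C}
    (hA : ∀ s ∈ radHom A A, IsIso (𝟙 A + s)) (hB : ∀ s ∈ radHom B B, IsIso (𝟙 B + s))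
    {r : A ⊞ B ⟶ A ⊞ B} (hr : r ∈ radHom (A ⊞ B) (A ⊞ B)) : IsIso (𝟙 (A ⊞ B) + r) := by
  have hrad : ∀ {P Q : C} (i : P ⟶ A ⊞ B) (p : A ⊞ B ⟶ Q), i ≫ r ≫ p ∈ radHom P Q :=
    fun i p => comp_mem_radHom_left i (comp_mem_radHom_right hr p)
  have : IsIso (biprod.inr ≫ (𝟙 (A ⊞ B) + r) ≫ biprod.snd) := by
    simpa [Preadditive.comp_add, Preadditive.add_comp] using hB _ (hrad biprod.inr biprod.snd)
  rw [Biprod.isIso_iff_isIso_fst_of_mem_radHom hA _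
    (by simpa [Preadditive.comp_add, Preadditive.add_comp] using hrad biprod.inr biprod.fst)]
  simpa [Preadditive.comp_add, Preadditive.add_comp] using hA _ (hrad biprod.inl biprod.fst)

lemma card_end_lt_card_end_biprod [∀ X Y : C, Finite (X ⟶ Y)] {A B : C}
    (hA : ¬IsZero A) (hB : ¬IsZero B) :
    Nat.card (A ⟶ A) < Nat.card (A ⊞ B ⟶ A ⊞ B) ∧
      Nat.card (B ⟶ B) < Nat.card (A ⊞ B ⟶ A ⊞ B) := by
  have hinj : Function.Injective fun p : (A ⟶ A) × (B ⟶ B) => biprod.map p.1 p.2 := by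
    rintro ⟨a, b⟩ ⟨a', b'⟩ h
    exact Prod.ext (by simpa using congr_arg (biprod.inl ≫ · ≫ biprod.fst) h)
      (by simpa using congr_arg (biprod.inr ≫ · ≫ biprod.snd) h)
  have hle := Nat.card_le_card_of_injective _ hinj
  rw [Nat.card_prod] at hle
  have one_lt : ∀ X : C, ¬IsZero X → 1 < Nat.card (X ⟶ X) := fun X hX =>
    Finite.one_lt_card_iff_nontrivial.2 ⟨𝟙 X, 0, fun h => hX ((IsZero.iff_id_eq_zero X).2 h)⟩
  have := one_lt A hA
  have := one_lt B hB
  constructor <;> nlinarith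

theorem isIso_one_add_of_mem_radHom [∀ X Y : C, Finite (X ⟶ Y)]
    (hloc : ∀ X : C, Indecomposable X → IsLocalRing (End X)) {X : C} {r : X ⟶ X}
    (hr : r ∈ radHom X X) : IsIso (𝟙 X + r) := by
  induction hN : Nat.card (X ⟶ X) using Nat.strong_induction_on generalizing X with
  | _ N ih =>
  by_cases hX₀ : IsZero X
  · exact hX₀.isIso hX₀ _
  by_cases hX : Indecomposable X
  · have := hloc X hX
    exact isIso_one_add_of_mem_radHom_of_indecomposable hX hr
  obtain ⟨A, hA, B, ⟨e⟩, hB⟩ : ∃ A : C, ¬IsZero A ∧ ∃ B : C, Nonempty (X ≅ A ⊞ B) ∧ ¬IsZero B := by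
    simpa [Indecomposable, hX₀] using hX
  have hcard := card_end_lt_card_end_biprod hA hB
  rw [← Nat.card_congr (e.homCongr e), hN] at hcard
  have : IsIso (𝟙 (A ⊞ B) + e.inv ≫ r ≫ e.hom) :=
    isIso_one_add_of_mem_radHom_biprod (fun s hs => ih _ hcard.1 hs rfl)
      (fun s hs => ih _ hcard.2 hs rfl)
      (comp_mem_radHom_left e.inv (comp_mem_radHom_right hr e.hom))
  rw [show 𝟙 X + r = e.hom ≫ (𝟙 (A ⊞ B) + e.inv ≫ r ≫ e.hom) ≫ e.inv by
    simp [Preadditive.comp_add, Preadditive.add_comp]]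
  infer_instance

end RadicalUnits

section Counting

variable {G H : Type*} [AddGroup G] [AddGroup H]

lemma AddMonoidHom.card_subtype_comp_of_surjective (f : G →+ H) (hf : Function.Surjective f)
    (P : H → Prop) : Nat.card {g // P (f g)} = Nat.card f.ker * Nat.card {h // P h} := by
  let s := Function.surjInv hf
  have hs : ∀ h, f (s h) = h := Function.surjInv_eq hf
  let e : {g // P (f g)} ≃ {h // P h} × f.ker :=
    { toFun := fun g => (⟨f g, g.2⟩, ⟨-s (f g) + g, by simp [hs]⟩)
      invFun := fun p => ⟨s p.1 + p.2, by simpa [hs, f.mem_ker.1 p.2.2] using p.1.2⟩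
      left_inv := fun g => by simp
      right_inv := fun p => by
        have := f.mem_ker.1 p.2.2
        ext <;> simp [hs, this] }
  rw [Nat.card_congr e, Nat.card_prod, mul_comm]

lemma AddMonoidHom.card_subtype_range_eq_div [Finite G] {H' : Type*} [AddGroup H'] [Finite H']
    (φ : G →+ H) (ρ : G →+ H') (hρ : Function.Surjective ρ) (P : H → Prop) (Q : H' → Prop)
    (hPQ : ∀ g, P (φ g) ↔ Q (ρ g)) :
    (Nat.card {h // (∃ g, h = φ g) ∧ P h} : ℚ) =
      Nat.card {h // ∃ g, h = φ g} * Nat.card {h // Q h} / Nat.card H' := by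
  have hrange : ∀ h, h ∈ φ.range ↔ ∃ g, h = φ g := fun h => by simp [eq_comm]
  have hP := φ.rangeRestrict.card_subtype_comp_of_surjective φ.rangeRestrict_surjective
    (fun h => P h)
  have hQ := ρ.card_subtype_comp_of_surjective hρ Q
  have hG := φ.rangeRestrict.card_subtype_comp_of_surjective φ.rangeRestrict_surjective
    (fun _ => True)
  have hG' := ρ.card_subtype_comp_of_surjective hρ (fun _ => True)
  simp only [Nat.card_subtype_true] at hG hG'
  rw [← Nat.card_congr (Equiv.subtypeEquivRight hrange),
    ← Nat.card_congr ((Equiv.subtypeSubtypeEquivSubtypeInter _ _).trans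
      (Equiv.subtypeEquivRight fun h => and_congr_left' (hrange h)))]
  have hker : (Nat.card φ.rangeRestrict.ker : ℚ) ≠ 0 := by
    have : Nonempty φ.rangeRestrict.ker := ⟨0⟩
    exact_mod_cast Nat.card_pos.ne'
  have hH' : (Nat.card H' : ℚ) ≠ 0 := by
    have : Nonempty H' := ⟨0⟩
    exact_mod_cast Nat.card_pos.ne'
  rw [eq_div_iff hH']
  apply mul_left_cancel₀ hker
  have hP' : (Nat.card φ.rangeRestrict.ker : ℚ) * Nat.card {h : φ.range // P h} =
      Nat.card ρ.ker * Nat.card {h // Q h} := by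
    exact_mod_cast hP.symm.trans ((Nat.card_congr (Equiv.subtypeEquivRight hPQ)).trans hQ)
  have hG'' : (Nat.card φ.rangeRestrict.ker : ℚ) * Nat.card φ.range =
      Nat.card ρ.ker * Nat.card H' := by exact_mod_cast hG.symm.trans hG'
  linear_combination (Nat.card H' : ℚ) * hP' - (Nat.card {h // Q h} : ℚ) * hG''

end Counting

noncomputable def autEquivIsIsoOneAdd {C : Type u} [Category.{v} C] [Preadditive C] (X : C) :
    Aut X ≃ {a : X ⟶ X // IsIso (𝟙 X + a)} where
  toFun e := ⟨e.hom - 𝟙 X, by simpa using e.isIso_hom⟩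
  invFun a := haveI := a.2; asIso (𝟙 X + a.1)
  left_inv e := by ext; simp
  right_inv a := by ext; simp

section Stabilizer

variable {C : Type u} [Category.{v} C] [Preadditive C] [HasZeroObject C] [HasShift C ℤ]
  [∀ i : ℤ, (shiftFunctor C i).Additive] [Pretriangulated C]

noncomputable def autStabilizerEquiv {X Y Z : C} {f : X ⟶ Y} {g : Y ⟶ Z}
    {h : Z ⟶ X⟦(1 : ℤ)⟧} (hT : Triangle.mk f g h ∈ distTriang C) :
    {b : Aut Z // g ≫ b.hom = g} ≃ {r : Z ⟶ Z // (∃ t, r = h ≫ t) ∧ IsIso (𝟙 Z + r)} where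
  toFun b :=
    have hb : g ≫ (b.1.hom - 𝟙 Z) = 0 := by
      rw [Preadditive.comp_sub, b.2, Category.comp_id, sub_self]
    ⟨b.1.hom - 𝟙 Z, Triangle.yoneda_exact₃ _ hT _ hb, by simpa using b.1.isIso_hom⟩
  invFun r := ⟨haveI := r.2.2; asIso (𝟙 Z + r.1), by
    obtain ⟨t, ht⟩ := r.2.1
    have hgh : g ≫ h = 0 := comp_distTriang_mor_zero₂₃ _ hT
    simp [ht, Preadditive.comp_add, reassoc_of% hgh]⟩
  left_inv b := by ext; simp
  right_inv r := by ext; simp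

end Stabilizer

lemma isIso_one_add_comp_iff_of_mem_radHom {C : Type u} [Category.{v} C] [Preadditive C]
    [HasBinaryBiproducts C] [∀ X Y : C, Finite (X ⟶ Y)]
    (hloc : ∀ X : C, Indecomposable X → IsLocalRing (End X)) {L L₁ L₂ Z Z₁ Z₂ : C}
    (eL : L ≅ L₁ ⊞ L₂) (eZ : Z ≅ Z₁ ⊞ Z₂) (n₁₁ : L₁ ⟶ Z₁) {n₂₂ : L₂ ⟶ Z₂}
    (h₂₂ : n₂₂ ∈ radHom L₂ Z₂) (t : Z ⟶ L) :
    IsIso (𝟙 L + (eL.hom ≫ biprod.map n₁₁ n₂₂ ≫ eZ.inv) ≫ t) ↔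
      IsIso (𝟙 L₁ + n₁₁ ≫ biprod.inl ≫ eZ.inv ≫ t ≫ eL.hom ≫ biprod.fst) := by
  set s := eZ.inv ≫ t ≫ eL.hom
  have hconj : 𝟙 L + (eL.hom ≫ biprod.map n₁₁ n₂₂ ≫ eZ.inv) ≫ t =
      eL.hom ≫ (𝟙 (L₁ ⊞ L₂) + biprod.map n₁₁ n₂₂ ≫ s) ≫ eL.inv := by
    simp [s, Preadditive.comp_add, Preadditive.add_comp]
  have : IsIso (biprod.inr ≫ (𝟙 (L₁ ⊞ L₂) + biprod.map n₁₁ n₂₂ ≫ s) ≫ biprod.snd) := by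
    simpa [Preadditive.comp_add, Preadditive.add_comp] using
      isIso_one_add_of_mem_radHom hloc (comp_mem_radHom_right h₂₂ (biprod.inr ≫ s ≫ biprod.snd))
  rw [hconj, isIso_comp_left_iff, isIso_comp_right_iff,
    Biprod.isIso_iff_isIso_fst_of_mem_radHom (fun _ => isIso_one_add_of_mem_radHom hloc) _
      (by simpa using comp_mem_radHom_right h₂₂ (biprod.inr ≫ s ≫ biprod.fst))]
  simp [s, Preadditive.comp_add, Preadditive.add_comp]

/-- cardinality of the stabilizer of `m` under the right action of `Aut L`. -/
theorem stmt4 {k : Type*} [Field k] [Finite k]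
    {C : Type u} [CategoryTheory.Category.{v} C] [Preadditive C] [CategoryTheory.Linear k C]
    [HasZeroObject C] [HasBinaryBiproducts C] [HasShift C ℤ]
    [∀ i : ℤ, (CategoryTheory.shiftFunctor C i).Additive] [Pretriangulated C]
    [∀ X Y : C, FiniteDimensional k (X ⟶ Y)]
    (hloc : ∀ X : C, Indecomposable X → IsLocalRing (CategoryTheory.End X))
    {Z M L L₁ L₂ Z₁' Z₂' : C} (l : Z ⟶ M) (m : M ⟶ L) (n : L ⟶ Z⟦(1 : ℤ)⟧)
    (hT : Triangle.mk l m n ∈ distTriang C)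
    (eL : L ≅ L₁ ⊞ L₂) (eZ : Z⟦(1 : ℤ)⟧ ≅ Z₁' ⊞ Z₂')
    (n₁₁ : L₁ ⟶ Z₁') (n₂₂ : L₂ ⟶ Z₂')
    (hn : n = eL.hom ≫ biprod.map n₁₁ n₂₂ ≫ eZ.inv)
    (h₁₁ : IsIso n₁₁) (h₂₂ : n₂₂ ∈ radHom L₂ Z₂') :
    (Nat.card {b : Aut L // m ≫ b.hom = m} : ℚ) =
      Nat.card {b : L ⟶ L // ∃ t : Z⟦(1 : ℤ)⟧ ⟶ L, b = n ≫ t} *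
        Nat.card (Aut L₁) / Nat.card (CategoryTheory.End L₁) := by
  have : ∀ X Y : C, Finite (X ⟶ Y) := fun X Y => Module.finite_of_finite k
  subst hn
  let ρ : (Z⟦(1 : ℤ)⟧ ⟶ L) →+ (L₁ ⟶ L₁) := AddMonoidHom.mk'
    (fun t => n₁₁ ≫ biprod.inl ≫ eZ.inv ≫ t ≫ eL.hom ≫ biprod.fst)
    (by simp [Preadditive.comp_add, Preadditive.add_comp])
  have hρ : Function.Surjective ρ := fun a =>
    ⟨eZ.hom ≫ biprod.fst ≫ inv n₁₁ ≫ a ≫ biprod.inl ≫ eL.inv, by simp [ρ]⟩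
  rw [Nat.card_congr (autStabilizerEquiv hT), Nat.card_congr (autEquivIsIsoOneAdd L₁)]
  exact (Preadditive.leftComp L _).card_subtype_range_eq_div ρ hρ _ _
    (isIso_one_add_comp_iff_of_mem_radHom hloc eL eZ n₁₁ h₂₂)
end

section
/- Let Z, L, M be objects of C. Then the three orbit sets V(Z,L;M), Hom(M,L)*_{Z[1]}, and Hom(Z,M)*_L all have the same (finite) cardinality: |V(Z,L;M)| = |Hom(M,L)*_{Z[1]}| = |Hom(Z,M)*_L|. -/
open CategoryTheory CategoryTheory.Limits CategoryTheory.Pretriangulated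

universe v u

section Defs

variable {C : Type u} [CategoryTheory.Category.{v} C] [Preadditive C]
  [HasZeroObject C] [HasShift C ℤ]
  [∀ i : ℤ, (CategoryTheory.shiftFunctor C i).Additive] [Pretriangulated C]

/-- `Cone(u) ≅ W`: there are morphisms completing `u` to a distinguished triangle with
third vertex `W`. -/
def ConeIs {A B : C} (u : A ⟶ B) (W : C) : Prop :=
  ∃ (v : B ⟶ W) (w : W ⟶ A⟦(1 : ℤ)⟧), Triangle.mk u v w ∈ distTriang C

/-- `W(Z,L;M)`: the set of triples `(l,m,n)` such that
`Z --l--> M --m--> L --n--> Z[1]` is a distinguished triangle. -/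
def Wset (Z L M : C) : Set ((Z ⟶ M) × (M ⟶ L) × (L ⟶ Z⟦(1 : ℤ)⟧)) :=
  {p | Triangle.mk p.1 p.2.1 p.2.2 ∈ distTriang C}

/-- The relation on `W(Z,L;M)` given by the action of `Aut Z × Aut L`:
`(d,b) · (l,m,n) = (dl, m b⁻¹, b n (d[1])⁻¹)` (compositions written left to right);
its quotient is the orbit set `V(Z,L;M)`. -/
def relV (Z L M : C) : ↥(Wset Z L M) → ↥(Wset Z L M) → Prop := fun p p' =>
  ∃ (d : Aut Z) (b : Aut L), p'.1.1 = d.hom ≫ p.1.1 ∧ p'.1.2.1 = p.1.2.1 ≫ b.inv ∧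
    p'.1.2.2 = b.hom ≫ p.1.2.2 ≫ (d.inv)⟦(1 : ℤ)⟧'

/-- The relation on `Hom(M,L)_{Z[1]}` given by the action of `Aut L`, `m ↦ m b⁻¹`;
its quotient is the orbit set `Hom(M,L)*_{Z[1]}`. -/
def relMZ (Z L M : C) : {m : M ⟶ L // ConeIs m (Z⟦(1 : ℤ)⟧)} →
    {m : M ⟶ L // ConeIs m (Z⟦(1 : ℤ)⟧)} → Prop := fun m m' =>
  ∃ b : Aut L, (m' : M ⟶ L) = (m : M ⟶ L) ≫ b.inv

/-- The relation on `Hom(Z,M)_L` given by the action of `Aut Z`, `l ↦ d l`;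
its quotient is the orbit set `Hom(Z,M)*_L`. -/
def relZM (Z L M : C) : {l : Z ⟶ M // ConeIs l L} → {l : Z ⟶ M // ConeIs l L} → Prop :=
  fun l l' => ∃ d : Aut Z, (l' : Z ⟶ M) = d.hom ≫ (l : Z ⟶ M)

end Defs

/-!
Remembering only the second (resp. first) morphism of a triangle maps `W(Z,L;M)` onto
`Hom(M,L)_{Z[1]}` (resp. `Hom(Z,M)_L`): onto because a triangle can be rotated. Two triangles
whose second morphisms differ by `b ∈ Aut L` (resp. first morphisms by `d ∈ Aut Z`) are related
by `Aut Z × Aut L`: completing `(𝟙_M, b)` (resp. `(d, 𝟙_M)`) to a morphism of triangles gives an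
isomorphism by the five lemma. Hence the projections induce bijections on orbit sets.
-/

lemma card_quot_eq_of_surjective {α β : Type*} {r : α → α → Prop} {s : β → β → Prop}
    (hs : Equivalence s) {f : α → β} (hf : Function.Surjective f)
    (hfr : ∀ a a', s (f a) (f a') ↔ r a a') : Nat.card (Quot r) = Nat.card (Quot s) := by
  refine Nat.card_eq_of_bijective
    (Quot.lift (fun a => Quot.mk s (f a)) fun a a' h => Quot.sound ((hfr a a').2 h)) ⟨?_, ?_⟩
  · rintro ⟨a⟩ ⟨a'⟩ h
    exact Quot.sound ((hfr a a').1 (hs.eqvGen_iff.1 (Quot.eq.1 h)))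
  · rintro ⟨b⟩
    obtain ⟨a, rfl⟩ := hf b
    exact ⟨Quot.mk r a, rfl⟩

section

variable {C : Type u} [Category.{v} C] [Preadditive C] [HasZeroObject C] [HasShift C ℤ]
  [∀ i : ℤ, (shiftFunctor C i).Additive] [Pretriangulated C]

lemma exists_distTriang_mk_invRotate {Z M L : C} {m : M ⟶ L} {v : L ⟶ Z⟦(1 : ℤ)⟧}
    {w : Z⟦(1 : ℤ)⟧ ⟶ M⟦(1 : ℤ)⟧} (hT : Triangle.mk m v w ∈ distTriang C) :
    ∃ l : Z ⟶ M, Triangle.mk l m v ∈ distTriang C := by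
  -- the inverse rotation starts at `Z⟦1⟧⟦-1⟧`; transport it back to `Z`
  let e := (shiftFunctorCompIsoId C (1 : ℤ) (-1) (add_neg_cancel 1)).symm.app Z
  refine ⟨e.hom ≫ (Triangle.mk m v w).invRotate.mor₁,
    isomorphic_distinguished _ (inv_rot_of_distTriang _ hT) _ ?_⟩
  refine Triangle.isoMk _ _ e (Iso.refl _) (Iso.refl _) (Category.comp_id _)
    ((Category.comp_id _).trans (Category.id_comp _).symm) ?_
  change v ≫ _ = 𝟙 _ ≫ v ≫ _
  simp only [e, Iso.app_hom, Iso.symm_hom, Category.id_comp]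
  exact congrArg (v ≫ ·) (shift_shiftFunctorCompIsoId_inv_app 1 (-1) (add_neg_cancel 1) Z)

lemma exists_iso₁_of_distTriang_of_mor₂_comp {Z Z' M L L' : C} {l : Z ⟶ M} {m : M ⟶ L}
    {n : L ⟶ Z⟦(1 : ℤ)⟧} {l' : Z' ⟶ M} {n' : L' ⟶ Z'⟦(1 : ℤ)⟧} (b : L ≅ L')
    (hT : Triangle.mk l m n ∈ distTriang C) (hT' : Triangle.mk l' (m ≫ b.hom) n' ∈ distTriang C) :
    ∃ d : Z' ≅ Z, l' = d.hom ≫ l ∧ n' = b.inv ≫ n ≫ d.inv⟦(1 : ℤ)⟧' := by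
  obtain ⟨a, hl, hn⟩ : ∃ a : Z ⟶ Z', l ≫ 𝟙 M = a ≫ l' ∧ n ≫ a⟦(1 : ℤ)⟧' = b.hom ≫ n' :=
    complete_distinguished_triangle_morphism₁ _ _ hT hT' (𝟙 M) b.hom (Category.id_comp _).symm
  let φ : Triangle.mk l m n ⟶ Triangle.mk l' (m ≫ b.hom) n' :=
    { hom₁ := a, hom₂ := 𝟙 M, hom₃ := b.hom, comm₁ := hl, comm₂ := (Category.id_comp _).symm,
      comm₃ := hn }
  have : IsIso φ.hom₁ := isIso₁_of_isIso₂₃ φ hT hT' (IsIso.id M) (inferInstanceAs (IsIso b.hom))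
  have : IsIso a := this
  rw [Category.comp_id] at hl
  exact ⟨(asIso a).symm, by simp [hl], by simp [hn]⟩

lemma exists_iso₃_of_distTriang_of_comp_mor₁ {Z Z' M L L' : C} {l : Z ⟶ M} {m : M ⟶ L}
    {n : L ⟶ Z⟦(1 : ℤ)⟧} {m' : M ⟶ L'} {n' : L' ⟶ Z'⟦(1 : ℤ)⟧} (d : Z' ≅ Z)
    (hT : Triangle.mk l m n ∈ distTriang C) (hT' : Triangle.mk (d.hom ≫ l) m' n' ∈ distTriang C) :
    ∃ b : L ≅ L', m' = m ≫ b.hom ∧ n' = b.inv ≫ n ≫ d.inv⟦(1 : ℤ)⟧' := by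
  have hl : l ≫ 𝟙 M = d.inv ≫ d.hom ≫ l := by simp
  obtain ⟨c, hm, hn⟩ : ∃ c : L ⟶ L', m ≫ c = 𝟙 M ≫ m' ∧ n ≫ d.inv⟦(1 : ℤ)⟧' = c ≫ n' :=
    complete_distinguished_triangle_morphism _ _ hT hT' d.inv (𝟙 M) hl
  let φ : Triangle.mk l m n ⟶ Triangle.mk (d.hom ≫ l) m' n' :=
    { hom₁ := d.inv, hom₂ := 𝟙 M, hom₃ := c, comm₁ := hl, comm₂ := hm, comm₃ := hn }
  have : IsIso φ.hom₃ :=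
    isIso₃_of_isIso₁₂ φ hT hT' (inferInstanceAs (IsIso d.inv)) (IsIso.id M)
  have : IsIso c := this
  rw [Category.id_comp] at hm
  exact ⟨asIso c, hm.symm, by simp [hn]⟩

variable {Z L M : C}

def Wset.mor₁ (p : Wset Z L M) : {l : Z ⟶ M // ConeIs l L} :=
  ⟨p.1.1, p.1.2.1, p.1.2.2, p.2⟩

def Wset.mor₂ (p : Wset Z L M) : {m : M ⟶ L // ConeIs m (Z⟦(1 : ℤ)⟧)} :=
  ⟨p.1.2.1, p.1.2.2, -p.1.1⟦(1 : ℤ)⟧', rot_of_distTriang _ p.2⟩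

lemma Wset.mor₁_surjective : Function.Surjective (Wset.mor₁ (Z := Z) (L := L) (M := M)) :=
  fun ⟨l, v, w, hT⟩ => ⟨⟨(l, v, w), hT⟩, rfl⟩

lemma Wset.mor₂_surjective : Function.Surjective (Wset.mor₂ (Z := Z) (L := L) (M := M)) := by
  rintro ⟨m, v, w, hT⟩
  obtain ⟨l, hl⟩ := exists_distTriang_mk_invRotate hT
  exact ⟨⟨(l, m, v), hl⟩, rfl⟩

lemma relZM_mor₁_iff (p p' : Wset Z L M) :
    relZM Z L M (Wset.mor₁ p) (Wset.mor₁ p') ↔ relV Z L M p p' := by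
  obtain ⟨⟨l, m, n⟩, hT⟩ := p
  obtain ⟨⟨l', m', n'⟩, hT'⟩ := p'
  constructor
  · rintro ⟨d, rfl : l' = d.hom ≫ l⟩
    obtain ⟨b, hm, hn⟩ := exists_iso₃_of_distTriang_of_comp_mor₁ d hT hT'
    exact ⟨d, b.symm, rfl, hm, hn⟩
  · rintro ⟨d, -, hl, -, -⟩
    exact ⟨d, hl⟩

lemma relMZ_mor₂_iff (p p' : Wset Z L M) :
    relMZ Z L M (Wset.mor₂ p) (Wset.mor₂ p') ↔ relV Z L M p p' := by
  obtain ⟨⟨l, m, n⟩, hT⟩ := p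
  obtain ⟨⟨l', m', n'⟩, hT'⟩ := p'
  constructor
  · rintro ⟨b, rfl : m' = m ≫ b.inv⟩
    obtain ⟨d, hl, hn⟩ := exists_iso₁_of_distTriang_of_mor₂_comp b.symm hT hT'
    exact ⟨d, b, hl, rfl, hn⟩
  · rintro ⟨-, b, -, hm, -⟩
    exact ⟨b, hm⟩

variable (Z L M)

lemma relZM_equivalence : Equivalence (relZM Z L M) where
  refl _ := ⟨Iso.refl Z, (Category.id_comp _).symm⟩
  symm := by
    rintro _ _ ⟨d, h⟩
    exact ⟨d.symm, by rw [h]; exact (d.inv_hom_id_assoc _).symm⟩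
  trans := by
    rintro _ _ _ ⟨d, h⟩ ⟨d', h'⟩
    exact ⟨d' ≪≫ d, by rw [h', h]; exact (Category.assoc _ _ _).symm⟩

lemma relMZ_equivalence : Equivalence (relMZ Z L M) where
  refl _ := ⟨Iso.refl L, (Category.comp_id _).symm⟩
  symm := by
    rintro _ _ ⟨b, h⟩
    exact ⟨b.symm, show _ = _ ≫ b.hom by rw [h, Category.assoc, b.inv_hom_id, Category.comp_id]⟩
  trans := by
    rintro _ _ _ ⟨b, h⟩ ⟨b', h'⟩
    exact ⟨b' ≪≫ b, by rw [h', h, Category.assoc]; rfl⟩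

end

/-- `|V(Z,L;M)| = |Hom(M,L)*_{Z[1]}| = |Hom(Z,M)*_L|`. -/
theorem stmt6 {k : Type*} [Field k] [Finite k]
    {C : Type u} [CategoryTheory.Category.{v} C] [Preadditive C] [CategoryTheory.Linear k C]
    [HasZeroObject C] [HasBinaryBiproducts C] [HasShift C ℤ]
    [∀ i : ℤ, (CategoryTheory.shiftFunctor C i).Additive] [Pretriangulated C]
    [∀ X Y : C, FiniteDimensional k (X ⟶ Y)]
    (hloc : ∀ X : C, Indecomposable X → IsLocalRing (CategoryTheory.End X))
    (Z L M : C) :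
    Nat.card (Quot (relV Z L M)) = Nat.card (Quot (relMZ Z L M)) ∧
    Nat.card (Quot (relV Z L M)) = Nat.card (Quot (relZM Z L M)) :=
  ⟨card_quot_eq_of_surjective (relMZ_equivalence Z L M) Wset.mor₂_surjective relMZ_mor₂_iff,
    card_quot_eq_of_surjective (relZM_equivalence Z L M) Wset.mor₁_surjective relZM_mor₁_iff⟩
end
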